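/- arXiv:2006.05739 — 7 statements merged into one kernel-verified Lean document; each statement's English description precedes it below -/
import Mathlib

section
/- Let ρ be a positive definite complex n×n matrix, let T(X) = Σ_{i=1}^k A_i X A_i* with m×n complex matrices A₁,…,A_k satisfying Σ_{i=1}^k A_i* A_i ≤ I, and let σ be a positive semidefinite m×m matrix such that T(ρ)+σ is positive definite. Then for every complex n×n matrix X, Tr[ T(X) (T(ρ)+σ)^{-1} T(X)* ] ≤ Tr[ X ρ^{-1} X* ]. -/
open Matrix ComplexOrder

/-! With `W = X ρ⁻¹ Xᴴ`, the block matrix `[[W, X], [Xᴴ, ρ]]` is positive semidefinite because its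
Schur complement vanishes. Conjugating it by `A i ⊕ A i`, summing over `i` and adding `σ` to the
lower corner keeps it positive semidefinite, and the Schur complement of the result says
`T(X) (T(ρ) + σ)⁻¹ T(X)ᴴ ≤ T(W)`. Finally `Tr T(W) = Tr ((∑ (A i)ᴴ A i) W) ≤ Tr W`. -/

namespace Matrix

theorem fromBlocks_sum {ι l m n o α : Type*} [AddCommMonoid α] (s : Finset ι)
    (A : ι → Matrix n l α) (B : ι → Matrix n m α) (C : ι → Matrix o l α) (D : ι → Matrix o m α) :
    ∑ i ∈ s, fromBlocks (A i) (B i) (C i) (D i) =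
      fromBlocks (∑ i ∈ s, A i) (∑ i ∈ s, B i) (∑ i ∈ s, C i) (∑ i ∈ s, D i) := by
  ext (a | a) (b | b) <;> simp [sum_apply]

variable {𝕜 : Type*} [RCLike 𝕜] {ι l m n o : Type*} [Fintype l] [Fintype m] [Fintype n]
  [Fintype o]

theorem trace_le_trace_of_posSemidef_sub {A B : Matrix n n 𝕜} (h : (B - A).PosSemidef) :
    A.trace ≤ B.trace :=
  sub_nonneg.mp (trace_sub B A ▸ h.trace_nonneg)

open scoped MatrixOrder in
theorem PosSemidef.trace_mul_nonneg {P W : Matrix n n 𝕜} (hP : P.PosSemidef)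
    (hW : W.PosSemidef) : 0 ≤ (P * W).trace := by
  classical
  obtain ⟨B, rfl⟩ := CStarAlgebra.nonneg_iff_eq_star_mul_self.mp hW.nonneg
  rw [star_eq_conjTranspose, ← Matrix.mul_assoc, trace_mul_cycle]
  exact (hP.mul_mul_conjTranspose_same B).trace_nonneg

theorem trace_sum_mul_mul_conjTranspose_le [Fintype ι] [DecidableEq n] {A : ι → Matrix m n 𝕜}
    (hA : (1 - ∑ i, (A i)ᴴ * A i).PosSemidef) {W : Matrix n n 𝕜} (hW : W.PosSemidef) :
    (∑ i, A i * W * (A i)ᴴ).trace ≤ W.trace := by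
  have hcycle : (∑ i, A i * W * (A i)ᴴ).trace = ((∑ i, (A i)ᴴ * A i) * W).trace := by
    rw [trace_sum, Finset.sum_mul, trace_sum]
    exact Finset.sum_congr rfl fun i _ ↦ trace_mul_cycle _ _ _
  rw [hcycle, ← sub_nonneg, ← trace_sub, ← one_sub_mul]
  exact hA.trace_mul_nonneg hW

theorem posSemidef_fromBlocks_mul_inv_mul_conjTranspose [DecidableEq n] {ρ : Matrix n n 𝕜}
    (hρ : ρ.PosDef) (X : Matrix m n 𝕜) :
    (fromBlocks (X * ρ⁻¹ * Xᴴ) X Xᴴ ρ).PosSemidef := by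
  have := hρ.isUnit.invertible
  rw [PosDef.fromBlocks₂₂ _ _ hρ, sub_self]
  exact .zero

theorem PosSemidef.fromBlocks_conj {P : Matrix m m 𝕜} {Q : Matrix m n 𝕜} {R : Matrix n m 𝕜}
    {S : Matrix n n 𝕜} (h : (fromBlocks P Q R S).PosSemidef) (A : Matrix l m 𝕜)
    (B : Matrix o n 𝕜) :
    (fromBlocks (A * P * Aᴴ) (A * Q * Bᴴ) (B * R * Aᴴ) (B * S * Bᴴ)).PosSemidef := by
  convert h.mul_mul_conjTranspose_same (fromBlocks A 0 0 B) using 1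
  simp [fromBlocks_conjTranspose, fromBlocks_multiply]

theorem posSemidef_fromBlocks_zero_zero_zero [DecidableEq m] {σ : Matrix m m 𝕜}
    (hσ : σ.PosSemidef) : (fromBlocks (0 : Matrix l l 𝕜) 0 0 σ).PosSemidef := by
  have := hσ.conjTranspose_mul_mul_same (fromCols (0 : Matrix m l 𝕜) (1 : Matrix m m 𝕜))
  rw [conjTranspose_fromCols_eq_fromRows_conjTranspose, fromRows_mul,
    fromRows_mul_fromCols] at this
  simpa using this

theorem PosSemidef.fromBlocks_sum_conj_add [Fintype ι] {P Q S : Matrix n n 𝕜}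
    (h : (fromBlocks P Q Qᴴ S).PosSemidef) (A : ι → Matrix m n 𝕜) {σ : Matrix m m 𝕜}
    (hσ : σ.PosSemidef) :
    (fromBlocks (∑ i, A i * P * (A i)ᴴ) (∑ i, A i * Q * (A i)ᴴ) (∑ i, A i * Q * (A i)ᴴ)ᴴ
      (∑ i, A i * S * (A i)ᴴ + σ)).PosSemidef := by
  classical
  have hsum := posSemidef_sum Finset.univ fun i _ ↦ h.fromBlocks_conj (A i) (A i)
  rw [fromBlocks_sum] at hsum
  have hnoise := hsum.add (posSemidef_fromBlocks_zero_zero_zero (l := m) hσ)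
  rw [fromBlocks_add] at hnoise
  simpa [conjTranspose_sum, Matrix.mul_assoc] using hnoise

end Matrix

/-- monotonicity of the RLD metric `Tr[X ρ⁻¹ X*]` under CPTNI maps together
with additive noise. -/
theorem stmt2 {n m k : ℕ} (ρ : Matrix (Fin n) (Fin n) ℂ) (hρ : ρ.PosDef)
    (A : Fin k → Matrix (Fin m) (Fin n) ℂ)
    (hA : ((1 : Matrix (Fin n) (Fin n) ℂ) - ∑ i, (A i)ᴴ * A i).PosSemidef)
    (σ : Matrix (Fin m) (Fin m) ℂ) (hσ : σ.PosSemidef)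
    (hTρσ : ((∑ i, A i * ρ * (A i)ᴴ) + σ).PosDef)
    (X : Matrix (Fin n) (Fin n) ℂ) :
    (((∑ i, A i * X * (A i)ᴴ) * ((∑ i, A i * ρ * (A i)ᴴ) + σ)⁻¹ *
        (∑ i, A i * X * (A i)ᴴ)ᴴ).trace).re ≤ ((X * ρ⁻¹ * Xᴴ).trace).re := by
  have := hTρσ.isUnit.invertible
  have hblock :=
    (posSemidef_fromBlocks_mul_inv_mul_conjTranspose hρ X).fromBlocks_sum_conj_add A hσ
  have hschur := (PosDef.fromBlocks₂₂ _ _ hTρσ).mp hblock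
  have hW := hρ.posSemidef.inv.mul_mul_conjTranspose_same X
  exact (Complex.le_def.mp ((trace_le_trace_of_posSemidef_sub hschur).trans
    (trace_sum_mul_mul_conjTranspose_le hA hW))).1
end

section
/- Let ρ be a positive definite complex n×n matrix, let T(X) = Σ_{i=1}^k A_i X A_i* with m×n complex matrices A₁,…,A_k satisfying Σ_{i=1}^k A_i* A_i ≤ I, and let σ be a positive semidefinite m×m matrix such that T(ρ)+σ is positive definite. Then for every complex n×n matrix X, Tr[ T(X)* (T(ρ)+σ)^{-1} T(X) ] ≤ Tr[ X* ρ^{-1} X ]. -/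
/-!
Let `S = T(ρ) + σ`, `Z = S⁻¹ T(X)` and `W = T*(Z)`, where `T*(Z) = ∑ Aᵢᴴ Z Aᵢ` is the
Hilbert–Schmidt adjoint of `T`, and let `q` be the left-hand side. By duality
`Re Tr[Wᴴ X] = Re Tr[Zᴴ T(X)] = q`, and the Schwarz-type inequality
`Tr[Wᴴ ρ W] ≤ Tr[Zᴴ T(ρ) Z] ≤ Tr[Zᴴ S Z] = q` controls the quadratic term, so completing the
square, `0 ≤ Tr[(X - ρW)ᴴ ρ⁻¹ (X - ρW)]`, gives `Tr[Xᴴ ρ⁻¹ X] ≥ 2q - q`.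

For the Schwarz inequality write `ρ = RᴴR` and stack the Kraus operators into one matrix `V`,
so that `VᴴV = ∑ Aᵢᴴ Aᵢ ≤ 1`. Then `R W = Gᴴ V` for a stacked matrix `G` with
`Tr[Gᴴ G] = Tr[Zᴴ T(ρ) Z]`, and `VVᴴ ≤ 1` as well, both conditions meaning `‖V‖ ≤ 1`.
-/

open Matrix ComplexOrder

namespace Matrix

variable {ι m n : Type*} [Fintype ι] [Fintype m]

def stack {α : Type*} (A : ι → Matrix m n α) : Matrix (ι × m) n α :=
  of fun p j => A p.1 p.2 j

theorem conjTranspose_stack_mul_stack {α : Type*} [NonUnitalSemiring α] [StarRing α]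
    (B A : ι → Matrix m n α) : (stack B)ᴴ * stack A = ∑ i, (B i)ᴴ * A i := by
  ext j l
  simp only [stack, mul_apply, conjTranspose_apply, of_apply, sum_apply, Fintype.sum_prod_type]

def krausMapAdjoint (A : ι → Matrix m n ℂ) (Z : Matrix m m ℂ) : Matrix n n ℂ :=
  ∑ i, (A i)ᴴ * Z * A i

theorem conjTranspose_krausMapAdjoint (A : ι → Matrix m n ℂ) (Z : Matrix m m ℂ) :
    (krausMapAdjoint A Z)ᴴ = krausMapAdjoint A Zᴴ := by
  simp only [krausMapAdjoint, conjTranspose_sum, conjTranspose_mul, conjTranspose_conjTranspose,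
    Matrix.mul_assoc]

variable [Fintype n]

def krausMap (A : ι → Matrix m n ℂ) (X : Matrix n n ℂ) : Matrix m m ℂ :=
  ∑ i, A i * X * (A i)ᴴ

theorem trace_mul_krausMap (A : ι → Matrix m n ℂ) (Z : Matrix m m ℂ) (X : Matrix n n ℂ) :
    (Z * krausMap A X).trace = (krausMapAdjoint A Z * X).trace := by
  simp only [krausMap, krausMapAdjoint, Finset.mul_sum, Finset.sum_mul, trace_sum]
  refine Finset.sum_congr rfl fun i _ => ?_
  rw [show Z * (A i * X * (A i)ᴴ) = Z * A i * X * (A i)ᴴ by simp only [Matrix.mul_assoc],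
    trace_mul_comm]
  simp only [Matrix.mul_assoc]

open scoped MatrixOrder Matrix.Norms.L2Operator in
theorem one_sub_conjTranspose_mul_self_posSemidef_iff [DecidableEq n] (M : Matrix m n ℂ) :
    (1 - Mᴴ * M).PosSemidef ↔ ‖M‖ ≤ 1 := by
  rw [← le_iff, ← CStarAlgebra.norm_le_one_iff_of_nonneg _
    (posSemidef_conjTranspose_mul_self M).nonneg, l2_opNorm_conjTranspose_mul_self]
  simpa using (mul_self_le_mul_self_iff (norm_nonneg M) zero_le_one).symm

open scoped Matrix.Norms.L2Operator in
theorem PosSemidef.one_sub_mul_conjTranspose_self [DecidableEq m] [DecidableEq n]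
    {M : Matrix m n ℂ} (h : (1 - Mᴴ * M).PosSemidef) : (1 - M * Mᴴ).PosSemidef := by
  have hadj := one_sub_conjTranspose_mul_self_posSemidef_iff Mᴴ
  rw [conjTranspose_conjTranspose, l2_opNorm_conjTranspose] at hadj
  exact hadj.mpr ((one_sub_conjTranspose_mul_self_posSemidef_iff M).mp h)

theorem trace_conjTranspose_mul_mul_le_of_posSemidef_one_sub [DecidableEq m] {N : Matrix m m ℂ}
    (hN : (1 - N).PosSemidef) (G : Matrix m n ℂ) : (Gᴴ * N * G).trace ≤ (Gᴴ * G).trace := by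
  have := (hN.conjTranspose_mul_mul_same G).trace_nonneg
  rwa [Matrix.mul_sub, Matrix.sub_mul, Matrix.mul_one, trace_sub, sub_nonneg] at this

open scoped MatrixOrder in
theorem trace_conjTranspose_krausMapAdjoint_mul_mul_le [DecidableEq n] {ρ : Matrix n n ℂ}
    (hρ : ρ.PosSemidef) {A : ι → Matrix m n ℂ} (hA : (1 - ∑ i, (A i)ᴴ * A i).PosSemidef)
    (Z : Matrix m m ℂ) :
    ((krausMapAdjoint A Z)ᴴ * ρ * krausMapAdjoint A Z).trace ≤ (Zᴴ * krausMap A ρ * Z).trace := by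
  classical
  obtain ⟨R, rfl⟩ := CStarAlgebra.nonneg_iff_eq_star_mul_self.mp hρ.nonneg
  set G := stack fun i => (R * (A i)ᴴ * Z)ᴴ
  have hRW : R * krausMapAdjoint A Z = Gᴴ * stack A := by
    simp only [G, conjTranspose_stack_mul_stack, conjTranspose_conjTranspose, krausMapAdjoint,
      Finset.mul_sum, Matrix.mul_assoc]
  have hG : (Zᴴ * krausMap A (star R * R) * Z).trace = (Gᴴ * G).trace := by
    simp only [G, conjTranspose_stack_mul_stack, conjTranspose_conjTranspose, krausMap,
      Finset.mul_sum, Finset.sum_mul, trace_sum]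
    refine Finset.sum_congr rfl fun i _ => ?_
    rw [trace_mul_comm (R * (A i)ᴴ * Z)]
    simp only [conjTranspose_mul, conjTranspose_conjTranspose, star_eq_conjTranspose,
      Matrix.mul_assoc]
  have hV : (1 - stack A * (stack A)ᴴ).PosSemidef :=
    PosSemidef.one_sub_mul_conjTranspose_self (by rwa [conjTranspose_stack_mul_stack])
  calc ((krausMapAdjoint A Z)ᴴ * (star R * R) * krausMapAdjoint A Z).trace
      = ((R * krausMapAdjoint A Z)ᴴ * (R * krausMapAdjoint A Z)).trace := by
        simp only [conjTranspose_mul, star_eq_conjTranspose, Matrix.mul_assoc]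
    _ = (R * krausMapAdjoint A Z * (R * krausMapAdjoint A Z)ᴴ).trace := trace_mul_comm _ _
    _ = (Gᴴ * (stack A * (stack A)ᴴ) * G).trace := by
        simp only [hRW, conjTranspose_mul, conjTranspose_conjTranspose, Matrix.mul_assoc]
    _ ≤ (Gᴴ * G).trace := trace_conjTranspose_mul_mul_le_of_posSemidef_one_sub hV G
    _ = (Zᴴ * krausMap A (star R * R) * Z).trace := hG.symm

theorem PosDef.trace_add_sub_le_trace_conjTranspose_mul_inv_mul {p : Type*} [Fintype p]
    [DecidableEq n] {ρ : Matrix n n ℂ} (hρ : ρ.PosDef) (X W : Matrix n p ℂ) :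
    (Wᴴ * X).trace + (Xᴴ * W).trace - (Wᴴ * ρ * W).trace ≤ (Xᴴ * ρ⁻¹ * X).trace := by
  have hdet : IsUnit ρ.det := (isUnit_iff_isUnit_det ρ).mp hρ.isUnit
  have hsq : (X - ρ * W)ᴴ * ρ⁻¹ * (X - ρ * W) =
      Xᴴ * ρ⁻¹ * X - (Wᴴ * X + Xᴴ * W - Wᴴ * ρ * W) := by
    rw [conjTranspose_sub, conjTranspose_mul, hρ.isHermitian.eq]
    simp only [Matrix.sub_mul, Matrix.mul_sub, Matrix.mul_assoc,
      mul_nonsing_inv_cancel_left _ _ hdet, nonsing_inv_mul_cancel_left _ _ hdet]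
    abel
  have := (hρ.inv.posSemidef.conjTranspose_mul_mul_same (X - ρ * W)).trace_nonneg
  rwa [hsq, trace_sub, trace_sub, trace_add, sub_nonneg] at this

end Matrix

/-- monotonicity of the LLD metric `Tr[X* ρ⁻¹ X]` under CPTNI maps together
with additive noise. -/
theorem stmt3 {n m k : ℕ} (ρ : Matrix (Fin n) (Fin n) ℂ) (hρ : ρ.PosDef)
    (A : Fin k → Matrix (Fin m) (Fin n) ℂ)
    (hA : ((1 : Matrix (Fin n) (Fin n) ℂ) - ∑ i, (A i)ᴴ * A i).PosSemidef)
    (σ : Matrix (Fin m) (Fin m) ℂ) (hσ : σ.PosSemidef)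
    (hTρσ : ((∑ i, A i * ρ * (A i)ᴴ) + σ).PosDef)
    (X : Matrix (Fin n) (Fin n) ℂ) :
    (((∑ i, A i * X * (A i)ᴴ)ᴴ * ((∑ i, A i * ρ * (A i)ᴴ) + σ)⁻¹ *
        (∑ i, A i * X * (A i)ᴴ)).trace).re ≤ ((Xᴴ * ρ⁻¹ * X).trace).re := by
  change (krausMap A ρ + σ).PosDef at hTρσ
  change (((krausMap A X)ᴴ * (krausMap A ρ + σ)⁻¹ * krausMap A X).trace).re ≤ _
  set S := krausMap A ρ + σ
  set Y := krausMap A X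
  set W := krausMapAdjoint A (S⁻¹ * Y)
  have hZ : (S⁻¹ * Y)ᴴ = Yᴴ * S⁻¹ := by
    rw [conjTranspose_mul, conjTranspose_nonsing_inv, hTρσ.isHermitian.eq]
  have hWX : (Wᴴ * X).trace = (Yᴴ * S⁻¹ * Y).trace := by
    rw [conjTranspose_krausMapAdjoint, ← trace_mul_krausMap, hZ, Matrix.mul_assoc]
  have hXW : (Xᴴ * W).trace = star (Yᴴ * S⁻¹ * Y).trace := by
    rw [← hWX, ← trace_conjTranspose, conjTranspose_mul, conjTranspose_conjTranspose]
  have hWρW : (Wᴴ * ρ * W).trace ≤ (Yᴴ * S⁻¹ * Y).trace := calc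
    _ ≤ ((S⁻¹ * Y)ᴴ * krausMap A ρ * (S⁻¹ * Y)).trace :=
      trace_conjTranspose_krausMapAdjoint_mul_mul_le hρ.posSemidef hA _
    _ ≤ ((S⁻¹ * Y)ᴴ * S * (S⁻¹ * Y)).trace := by
      rw [Matrix.mul_add, Matrix.add_mul, trace_add]
      exact le_add_of_nonneg_right (hσ.conjTranspose_mul_mul_same _).trace_nonneg
    _ = (Yᴴ * S⁻¹ * Y).trace := by
      rw [hZ, nonsing_inv_mul_cancel_right _ _ ((isUnit_iff_isUnit_det S).mp hTρσ.isUnit),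
        Matrix.mul_assoc]
  have hsq := hρ.trace_add_sub_le_trace_conjTranspose_mul_inv_mul X W
  rw [hWX, hXW] at hsq
  have hsq_re := Complex.re_le_re hsq
  simp only [Complex.add_re, Complex.sub_re, Complex.star_def, Complex.conj_re] at hsq_re
  linarith [Complex.re_le_re hWρW]
end

section
/- Let (K^(n))_{n≥1} be a family of CPTNI monotone metrics, let n ≥ 2, and let ρ = diag(p₁,…,pₙ) be a diagonal positive definite n×n matrix with Tr ρ ≤ 1. Then K^(n)_ρ(E₁₁, E₂₂) = 0, where E₁₁ and E₂₂ are the matrix units with a single 1 in positions (1,1) and (2,2) respectively. -/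
open Matrix ComplexOrder

/-- Functional calculus for (Hermitian) matrices: apply `f` to each eigenvalue. -/
noncomputable def herCFC {n : ℕ} (f : ℝ → ℝ) (A : Matrix (Fin n) (Fin n) ℂ) :
    Matrix (Fin n) (Fin n) ℂ :=
  if h : A.IsHermitian then
    (h.eigenvectorUnitary : Matrix (Fin n) (Fin n) ℂ) *
      Matrix.diagonal (fun i => (f (h.eigenvalues i) : ℂ)) *
      (star (h.eigenvectorUnitary : Matrix (Fin n) (Fin n) ℂ))
  else 0

/-- `f : (0,∞) → (0,∞)` is operator monotone. -/
def OperatorMonotone (f : ℝ → ℝ) : Prop :=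
  (∀ x : ℝ, 0 < x → 0 < f x) ∧
  ∀ (n : ℕ) (A B : Matrix (Fin n) (Fin n) ℂ), A.PosDef → B.PosDef →
    (B - A).PosSemidef → (herCFC f B - herCFC f A).PosSemidef

/-- `T` is completely positive and trace non-increasing. -/
def IsCPTNI {n m : ℕ} (T : Matrix (Fin n) (Fin n) ℂ → Matrix (Fin m) (Fin m) ℂ) : Prop :=
  ∃ (k : ℕ) (A : Fin k → Matrix (Fin m) (Fin n) ℂ),
    (∀ X, T X = ∑ i, A i * X * (A i)ᴴ) ∧
    ((1 : Matrix (Fin n) (Fin n) ℂ) - ∑ i, (A i)ᴴ * A i).PosSemidef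

/-- `K` is an inner product on the space of `n × n` complex matrices. -/
def IsInnerProduct {n : ℕ}
    (K : Matrix (Fin n) (Fin n) ℂ → Matrix (Fin n) (Fin n) ℂ → ℂ) : Prop :=
  (∀ X Y Z, K (X + Y) Z = K X Z + K Y Z) ∧
  (∀ X Y Z, K X (Y + Z) = K X Y + K X Z) ∧
  (∀ (c : ℂ) (X Y : Matrix (Fin n) (Fin n) ℂ), K X (c • Y) = c * K X Y) ∧
  (∀ (c : ℂ) (X Y : Matrix (Fin n) (Fin n) ℂ), K (c • X) Y = (starRingEnd ℂ) c * K X Y) ∧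
  (∀ X Y, K Y X = (starRingEnd ℂ) (K X Y)) ∧
  (∀ X, X ≠ 0 → 0 < (K X X).re)

/-- A family of CPTNI monotone metrics. -/
def MonotoneMetricFamily
    (K : (n : ℕ) → Matrix (Fin n) (Fin n) ℂ →
      Matrix (Fin n) (Fin n) ℂ → Matrix (Fin n) (Fin n) ℂ → ℂ) : Prop :=
  (∀ (n : ℕ) (ρ : Matrix (Fin n) (Fin n) ℂ), ρ.PosDef → ρ.trace.re ≤ 1 →
    IsInnerProduct (K n ρ)) ∧
  (∀ (n m : ℕ) (T : Matrix (Fin n) (Fin n) ℂ → Matrix (Fin m) (Fin m) ℂ), IsCPTNI T →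
    ∀ (σ : Matrix (Fin m) (Fin m) ℂ), σ.PosSemidef →
    ∀ (ρ : Matrix (Fin n) (Fin n) ℂ), ρ.PosDef → ρ.trace.re ≤ 1 →
    (T ρ + σ).PosDef → (T ρ + σ).trace.re ≤ 1 →
    ∀ (X : Matrix (Fin n) (Fin n) ℂ),
      (K m (T ρ + σ) (T X) (T X)).re ≤ (K n ρ X X).re)

/-!
Compressing by the matrix unit `E₁₁` is a CPTNI map `T`, and adding back the rest of the
diagonal as `σ` gives `T ρ + σ = ρ`. Since `T (E₁₁ + c E₂₂) = E₁₁`, monotonicity says that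
`E₁₁` has the smallest `K_ρ`-norm on the line `E₁₁ + ℂ E₂₂`, so it is `K_ρ`-orthogonal to `E₂₂`.
-/

namespace IsInnerProduct

variable {n : ℕ} {G : Matrix (Fin n) (Fin n) ℂ → Matrix (Fin n) (Fin n) ℂ → ℂ}

lemma re_apply_add_smul (hG : IsInnerProduct G) (X Y : Matrix (Fin n) (Fin n) ℂ) (c : ℂ) :
    (G (X + c • Y) (X + c • Y)).re
      = (G X X).re + 2 * (c * G X Y).re + Complex.normSq c * (G Y Y).re := by
  obtain ⟨addL, addR, smulR, smulL, symm, -⟩ := hG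
  rw [addL, addR, addR, smulR, smulL, smulL, smulR, symm X Y]
  simp only [Complex.add_re, Complex.mul_re, Complex.mul_im, Complex.conj_re, Complex.conj_im,
    Complex.normSq_apply]
  ring

lemma eq_zero_of_forall_re_le (hG : IsInnerProduct G) {X Y : Matrix (Fin n) (Fin n) ℂ}
    (h : ∀ c : ℂ, (G X X).re ≤ (G (X + c • Y) (X + c • Y)).re) : G X Y = 0 := by
  simp only [hG.re_apply_add_smul] at h
  obtain ⟨-, -, smulR, -, -, pos⟩ := hG
  rcases eq_or_ne Y 0 with rfl | hY
  · simpa using smulR 0 X 0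
  set κ := G X Y
  set r := (G Y Y).re
  have hr : 0 < r := pos Y hY
  by_contra hκ
  have hκ' : 0 < Complex.normSq κ := Complex.normSq_pos.2 hκ
  -- at `c = -conj κ / r` the quadratic in `c` drops by `|κ|² / r`
  have := h (((-r⁻¹ : ℝ) : ℂ) * starRingEnd ℂ κ)
  rw [mul_assoc, ← Complex.normSq_eq_conj_mul_self] at this
  simp only [← Complex.ofReal_mul, Complex.ofReal_re, Complex.normSq_mul, Complex.normSq_ofReal,
    Complex.normSq_conj] at this
  field_simp at this
  nlinarith

end IsInnerProduct

lemma isCPTNI_mul_mul_conjTranspose {n m : ℕ} (A : Matrix (Fin m) (Fin n) ℂ)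
    (hA : (1 - Aᴴ * A).PosSemidef) : IsCPTNI (fun X : Matrix (Fin n) (Fin n) ℂ => A * X * Aᴴ) :=
  ⟨1, fun _ => A, fun X => by simp, by simpa using hA⟩

lemma posSemidef_one_sub_single {n : ℕ} (i : Fin n) : (1 - single i i (1 : ℂ)).PosSemidef := by
  rw [← diagonal_one, ← diagonal_single, diagonal_sub]
  refine posSemidef_diagonal_iff.2 fun j => ?_
  rcases eq_or_ne j i with rfl | hj <;> simp [*]

lemma isCPTNI_single_mul_mul_single {n : ℕ} (i : Fin n) :
    IsCPTNI (fun X : Matrix (Fin n) (Fin n) ℂ => single i i 1 * X * single i i 1) := by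
  simpa [conjTranspose_single] using
    isCPTNI_mul_mul_conjTranspose (single i i (1 : ℂ)) (by simpa using posSemidef_one_sub_single i)

lemma diagonal_eq_single_add_diagonal_update {m α : Type*} [DecidableEq m] [AddZeroClass α]
    (d : m → α) (i : m) :
    diagonal d = single i i (d i) + diagonal (Function.update d i 0) := by
  rw [← diagonal_single, diagonal_add]
  congr 1
  ext j
  rcases eq_or_ne j i with rfl | hj <;> simp [*]

namespace MonotoneMetricFamily

variable {K : (n : ℕ) → Matrix (Fin n) (Fin n) ℂ →
      Matrix (Fin n) (Fin n) ℂ → Matrix (Fin n) (Fin n) ℂ → ℂ}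
  {n : ℕ} {d : Fin n → ℂ}

lemma re_apply_single_le (hK : MonotoneMetricFamily K) (hρ : (diagonal d).PosDef)
    (htr : (diagonal d).trace.re ≤ 1) (i : Fin n) (X : Matrix (Fin n) (Fin n) ℂ) :
    (K n (diagonal d) (single i i (X i i)) (single i i (X i i))).re
      ≤ (K n (diagonal d) X X).re := by
  have hσ : (diagonal (Function.update d i 0)).PosSemidef := by
    refine posSemidef_diagonal_iff.2 fun j => ?_
    rcases eq_or_ne j i with rfl | hj
    · simp
    · simpa [hj] using (posDef_diagonal_iff.1 hρ j).le
  have hTρσ : single i i 1 * diagonal d * single i i 1 + diagonal (Function.update d i 0)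
      = diagonal d := by
    rw [single_mul_mul_single, diagonal_apply_eq, one_mul, mul_one,
      ← diagonal_eq_single_add_diagonal_update]
  have := hK.2 n n _ (isCPTNI_single_mul_mul_single i) _ hσ _ hρ htr
    (by rwa [hTρσ]) (by rwa [hTρσ]) X
  beta_reduce at this
  rwa [hTρσ, single_mul_mul_single, one_mul, mul_one] at this

theorem apply_single_eq_zero (hK : MonotoneMetricFamily K) (hρ : (diagonal d).PosDef)
    (htr : (diagonal d).trace.re ≤ 1) {i : Fin n} {Y : Matrix (Fin n) (Fin n) ℂ}
    (hY : Y i i = 0) : K n (diagonal d) (single i i 1) Y = 0 :=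
  (hK.1 n _ hρ htr).eq_zero_of_forall_re_le fun c => by
    have hX : (single i i 1 + c • Y : Matrix (Fin n) (Fin n) ℂ) i i = 1 := by simp [hY]
    have := hK.re_apply_single_le hρ htr i (single i i 1 + c • Y)
    rwa [hX] at this

end MonotoneMetricFamily

/-- for a diagonal positive definite state, the matrix units `E₁₁` and `E₂₂`
are orthogonal with respect to any CPTNI monotone metric. -/
theorem stmt5
    (K : (n : ℕ) → Matrix (Fin n) (Fin n) ℂ →
      Matrix (Fin n) (Fin n) ℂ → Matrix (Fin n) (Fin n) ℂ → ℂ)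
    (hK : MonotoneMetricFamily K)
    (n : ℕ) (hn : 2 ≤ n) (p : Fin n → ℝ)
    (hρ : (Matrix.diagonal (fun i => (p i : ℂ))).PosDef)
    (htr : (Matrix.diagonal (fun i => (p i : ℂ))).trace.re ≤ 1) :
    K n (Matrix.diagonal (fun i => (p i : ℂ)))
      (Matrix.single (⟨0, by omega⟩ : Fin n) (⟨0, by omega⟩ : Fin n) 1)
      (Matrix.single (⟨1, by omega⟩ : Fin n) (⟨1, by omega⟩ : Fin n) 1) = 0 :=
  hK.apply_single_eq_zero hρ htr (by simp)
end

section
/- Let (K^(n))_{n≥1} be a family of CPTNI monotone metrics, let n ≥ 1, and let ρ = diag(p₁,…,pₙ) be a diagonal positive definite n×n matrix with Tr ρ ≤ 1 and p₁ ≤ 1/2. Then K^(n)_ρ(E₁₁^(n), E₁₁^(n)) = K^(2)_{diag(p₁,p₁)}(E₁₂^(2), E₁₂^(2)), where E₁₁^(n) is the n×n matrix unit with a single 1 in position (1,1) and E₁₂^(2) is the 2×2 matrix unit with a single 1 in position (1,2). -/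
open Matrix ComplexOrder

/-! Write `‖X‖² = Re K_σ(X, X)` and `X ⊥ Y` for `Re K_σ(X, Y) = 0`. Monotonicity under the
Kraus operator `E_{j i}`, padded by the diagonal state that restores the target state, and under
its reverse shows that `‖E_{ii}‖` at a diagonal state depends only on the weight `ρ_{ii}`; this
moves the problem to the scalar state `p₁ I₂`, whose trace is `≤ 1` because `p₁ ≤ 1/2`.
Compressing `t E₁₁ + E₂₂` to `t E₁₁` makes `t ↦ 2t Re K(E₁₁, E₂₂)` bounded below, so
`E₁₁ ⊥ E₂₂`. At a scalar state every unitary conjugation is an isometry; the swap, the phase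
`diag(1, i)` and the Hadamard matrix give `‖E₂₂‖ = ‖E₁₁‖`, `‖E₂₁‖ = ‖E₁₂‖`, `E₁₂ ⊥ E₂₁` and
`‖E₁₁ - E₂₂‖ = ‖E₁₂ + E₂₁‖`, hence `‖E₁₁‖ = ‖E₁₂‖`. -/

namespace IsInnerProduct

variable {n : ℕ} {K : Matrix (Fin n) (Fin n) ℂ → Matrix (Fin n) (Fin n) ℂ → ℂ}
  (hK : IsInnerProduct K)
include hK

lemma im_self (X : Matrix (Fin n) (Fin n) ℂ) : (K X X).im = 0 := by
  have h := congrArg Complex.im (hK.2.2.2.2.1 X X)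
  rw [Complex.conj_im] at h
  linarith

lemma re_comm (X Y : Matrix (Fin n) (Fin n) ℂ) : (K Y X).re = (K X Y).re := by
  rw [hK.2.2.2.2.1 X Y, Complex.conj_re]

lemma apply_smul_smul (a b : ℂ) (X Y : Matrix (Fin n) (Fin n) ℂ) :
    K (a • X) (b • Y) = starRingEnd ℂ a * b * K X Y := by
  rw [hK.2.2.2.1, hK.2.2.1, mul_assoc]

lemma re_ofReal_smul_left (t : ℝ) (X Y : Matrix (Fin n) (Fin n) ℂ) :
    (K ((t : ℂ) • X) Y).re = t * (K X Y).re := by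
  rw [hK.2.2.2.1, Complex.conj_ofReal, Complex.re_ofReal_mul]

lemma re_smul_self (c : ℂ) (X : Matrix (Fin n) (Fin n) ℂ) :
    (K (c • X) (c • X)).re = Complex.normSq c * (K X X).re := by
  rw [hK.apply_smul_smul, ← Complex.normSq_eq_conj_mul_self, Complex.re_ofReal_mul]

lemma re_add_self (X Y : Matrix (Fin n) (Fin n) ℂ) :
    (K (X + Y) (X + Y)).re = (K X X).re + 2 * (K X Y).re + (K Y Y).re := by
  rw [hK.1, hK.2.1, hK.2.1, Complex.add_re, Complex.add_re, Complex.add_re, hK.re_comm X Y]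
  ring

lemma re_sub_self (X Y : Matrix (Fin n) (Fin n) ℂ) :
    (K (X - Y) (X - Y)).re = (K X X).re - 2 * (K X Y).re + (K Y Y).re := by
  have h := hK.apply_smul_smul (-1) (-1) Y Y
  have h' := hK.2.2.1 (-1) X Y
  simp only [neg_one_smul, map_neg, map_one, neg_mul, one_mul, neg_neg] at h h'
  rw [sub_eq_add_neg, hK.re_add_self, h, h', Complex.neg_re]
  ring

end IsInnerProduct

lemma eq_zero_of_forall_nonneg_mul_add {a b : ℝ} (h : ∀ t, 0 ≤ a * t + b) : a = 0 := by
  by_contra ha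
  have := h (-(b + 1) / a)
  rw [mul_div_cancel₀ _ ha] at this
  linarith

lemma inv_sqrt_two_mul_self : ((Real.sqrt 2 : ℂ))⁻¹ * ((Real.sqrt 2 : ℂ))⁻¹ = 2⁻¹ := by
  rw [← mul_inv, ← Complex.ofReal_mul, Real.mul_self_sqrt zero_le_two]
  norm_num

namespace IsInnerProduct

variable {K : Matrix (Fin 2) (Fin 2) ℂ → Matrix (Fin 2) (Fin 2) ℂ → ℂ} (hK : IsInnerProduct K)
include hK

lemma re_single_zero_zero_eq_re_single_zero_one
    (hU : ∀ U ∈ unitaryGroup (Fin 2) ℂ, ∀ X, (K (U * X * Uᴴ) (U * X * Uᴴ)).re = (K X X).re)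
    (horth : (K (single 0 0 1) (single 1 1 1)).re = 0) :
    (K (single 0 0 1) (single 0 0 1)).re = (K (single 0 1 1) (single 0 1 1)).re := by
  set W : Matrix (Fin 2) (Fin 2) ℂ := !![0, 1; 1, 0]
  set V : Matrix (Fin 2) (Fin 2) ℂ := diagonal ![1, Complex.I]
  set H : Matrix (Fin 2) (Fin 2) ℂ := ((Real.sqrt 2)⁻¹ : ℂ) • !![1, 1; 1, -1]
  have hW : W ∈ unitaryGroup (Fin 2) ℂ := by
    rw [mem_unitaryGroup_iff, star_eq_conjTranspose]
    ext i j; fin_cases i <;> fin_cases j <;> simp [W, mul_apply, Fin.sum_univ_two]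
  have hV : V ∈ unitaryGroup (Fin 2) ℂ := by
    rw [mem_unitaryGroup_iff, star_eq_conjTranspose]
    ext i j; fin_cases i <;> fin_cases j <;> simp [V, mul_apply, Fin.sum_univ_two]
  have hH : H ∈ unitaryGroup (Fin 2) ℂ := by
    rw [mem_unitaryGroup_iff, star_eq_conjTranspose]
    ext i j; fin_cases i <;> fin_cases j <;>
      simp [H, mul_apply, Fin.sum_univ_two, inv_sqrt_two_mul_self] <;> norm_num
  have hW00 : W * single 0 0 1 * Wᴴ = single 1 1 1 := by
    ext i j; simp only [mul_apply, Fin.sum_univ_two]; fin_cases i <;> fin_cases j <;> simp [W]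
  have hW01 : W * single 0 1 1 * Wᴴ = single 1 0 1 := by
    ext i j; simp only [mul_apply, Fin.sum_univ_two]; fin_cases i <;> fin_cases j <;> simp [W]
  have hVx :
      V * (single 0 1 1 + single 1 0 1) * Vᴴ = Complex.I • (single 1 0 1 - single 0 1 1) := by
    ext i j; simp only [mul_apply, Fin.sum_univ_two]; fin_cases i <;> fin_cases j <;> simp [V]
  have hHz : H * (single 0 0 1 - single 1 1 1) * Hᴴ = single 0 1 1 + single 1 0 1 := by
    ext i j; simp only [mul_apply, Fin.sum_univ_two]; fin_cases i <;> fin_cases j <;>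
      simp [H, inv_sqrt_two_mul_self] <;> norm_num
  have h00 := hU W hW (single 0 0 1)
  have h01 := hU W hW (single 0 1 1)
  have hx := hU V hV (single 0 1 1 + single 1 0 1)
  have hz := hU H hH (single 0 0 1 - single 1 1 1)
  rw [hW00] at h00
  rw [hW01] at h01
  rw [hVx, hK.re_smul_self, Complex.normSq_I, one_mul, hK.re_sub_self, hK.re_add_self,
    hK.re_comm (single 0 1 1)] at hx
  rw [hHz, hK.re_add_self, hK.re_sub_self] at hz
  linarith

end IsInnerProduct

namespace MonotoneMetricFamily

variable {K : (n : ℕ) → Matrix (Fin n) (Fin n) ℂ →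
      Matrix (Fin n) (Fin n) ℂ → Matrix (Fin n) (Fin n) ℂ → ℂ}
  (hK : MonotoneMetricFamily K)
include hK

lemma re_conj_le {n m : ℕ} (A : Matrix (Fin m) (Fin n) ℂ)
    (hA : ((1 : Matrix (Fin n) (Fin n) ℂ) - Aᴴ * A).PosSemidef)
    {ρ : Matrix (Fin n) (Fin n) ℂ} (hρ : ρ.PosDef) (hρtr : ρ.trace.re ≤ 1)
    {σ ρ' : Matrix (Fin m) (Fin m) ℂ} (hσ : σ.PosSemidef)
    (hρ' : ρ'.PosDef) (hρ'tr : ρ'.trace.re ≤ 1) (hstate : A * ρ * Aᴴ + σ = ρ')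
    (X : Matrix (Fin n) (Fin n) ℂ) :
    (K m ρ' (A * X * Aᴴ) (A * X * Aᴴ)).re ≤ (K n ρ X X).re := by
  have hT : IsCPTNI (fun Y : Matrix (Fin n) (Fin n) ℂ => A * Y * Aᴴ) :=
    ⟨1, ![A], fun Y => by simp, by simpa using hA⟩
  subst hstate
  exact hK.2 n m _ hT σ hσ ρ hρ hρtr hρ' hρ'tr X

lemma re_conj_unitary {n : ℕ} {ρ : Matrix (Fin n) (Fin n) ℂ} (hρ : ρ.PosDef)
    (hρtr : ρ.trace.re ≤ 1) {U : Matrix (Fin n) (Fin n) ℂ} (hU : U ∈ unitaryGroup (Fin n) ℂ)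
    (hUρ : U * ρ * Uᴴ = ρ) (X : Matrix (Fin n) (Fin n) ℂ) :
    (K n ρ (U * X * Uᴴ) (U * X * Uᴴ)).re = (K n ρ X X).re := by
  have hUU : Uᴴ * U = 1 := mem_unitaryGroup_iff'.mp hU
  have hUU' : U * Uᴴ = 1 := mem_unitaryGroup_iff.mp hU
  have hcancel : ∀ Y, Uᴴ * (U * Y * Uᴴ) * Uᴴᴴ = Y := fun Y => by
    rw [conjTranspose_conjTranspose]
    simp only [← Matrix.mul_assoc, hUU, Matrix.one_mul]
    rw [Matrix.mul_assoc, hUU, Matrix.mul_one]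
  have hUρ' : Uᴴ * ρ * Uᴴᴴ = ρ := by
    conv_lhs => rw [← hUρ]
    exact hcancel ρ
  refine le_antisymm (hK.re_conj_le U (by simp [hUU, PosSemidef.zero]) hρ hρtr PosSemidef.zero
    hρ hρtr (by rw [hUρ, add_zero]) X) ?_
  simpa only [hcancel] using hK.re_conj_le Uᴴ (by simp [hUU', PosSemidef.zero]) hρ hρtr
    PosSemidef.zero hρ hρtr (by rw [hUρ', add_zero]) (U * X * Uᴴ)

lemma re_smul_single_le {n m : ℕ} {d : Fin n → ℂ} {d' : Fin m → ℂ}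
    (hd : (diagonal d).PosDef) (hdtr : (diagonal d).trace.re ≤ 1)
    (hd' : (diagonal d').PosDef) (hd'tr : (diagonal d').trace.re ≤ 1)
    {i : Fin n} {j : Fin m} (hij : d' j = d i) (X : Matrix (Fin n) (Fin n) ℂ) :
    (K m (diagonal d') (X i i • single j j 1) (X i i • single j j 1)).re ≤
      (K n (diagonal d) X X).re := by
  have hconj : ∀ Y : Matrix (Fin n) (Fin n) ℂ,
      single j i (1 : ℂ) * Y * (single j i (1 : ℂ))ᴴ = Y i i • single j j (1 : ℂ) := fun Y => by
    simp [smul_single]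
  have hA :
      ((1 : Matrix (Fin n) (Fin n) ℂ) - (single j i (1 : ℂ))ᴴ * single j i (1 : ℂ)).PosSemidef := by
    rw [conjTranspose_single, star_one, single_mul_single_same, one_mul, ← diagonal_single,
      ← diagonal_one, diagonal_sub, posSemidef_diagonal_iff]
    intro k
    by_cases hk : k = i <;> simp [hk]
  have hσ : (diagonal (Function.update d' j 0)).PosSemidef := by
    rw [posSemidef_diagonal_iff]
    intro k
    by_cases hk : k = j
    · simp [hk]
    · simpa [hk] using (posDef_diagonal_iff.mp hd' k).le
  have hstate : single j i (1 : ℂ) * diagonal d * (single j i (1 : ℂ))ᴴ +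
      diagonal (Function.update d' j 0) = diagonal d' := by
    rw [hconj, diagonal_apply_eq, ← hij, smul_single, smul_eq_mul, mul_one, ← diagonal_single,
      diagonal_add]
    congr 1
    funext k
    by_cases hk : k = j <;> simp [hk]
  simpa only [hconj] using hK.re_conj_le _ hA hd hdtr hσ hd' hd'tr hstate X

lemma re_single_eq {n m : ℕ} {d : Fin n → ℂ} {d' : Fin m → ℂ}
    (hd : (diagonal d).PosDef) (hdtr : (diagonal d).trace.re ≤ 1)
    (hd' : (diagonal d').PosDef) (hd'tr : (diagonal d').trace.re ≤ 1)
    {i : Fin n} {j : Fin m} (hij : d' j = d i) :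
    (K n (diagonal d) (single i i 1) (single i i 1)).re =
      (K m (diagonal d') (single j j 1) (single j j 1)).re := by
  have h := hK.re_smul_single_le hd hdtr hd' hd'tr hij (single i i 1)
  have h' := hK.re_smul_single_le hd' hd'tr hd hdtr hij.symm (single j j 1)
  simp only [single_apply_same, one_smul] at h h'
  exact le_antisymm h' h

lemma re_single_single_eq_zero {n : ℕ} {d : Fin n → ℂ}
    (hd : (diagonal d).PosDef) (hdtr : (diagonal d).trace.re ≤ 1) {i j : Fin n} (hij : i ≠ j) :
    (K n (diagonal d) (single i i 1) (single j j 1)).re = 0 := by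
  have hin := hK.1 n _ hd hdtr
  suffices hbound : ∀ t : ℝ, 0 ≤ 2 * (K n (diagonal d) (single i i 1) (single j j 1)).re * t +
      (K n (diagonal d) (single j j 1) (single j j 1)).re by
    linarith [eq_zero_of_forall_nonneg_mul_add hbound]
  intro t
  have h := hK.re_smul_single_le hd hdtr hd hdtr (i := i) (j := i) rfl
    ((t : ℂ) • single i i 1 + single j j 1)
  have hii : ((t : ℂ) • single i i 1 + single j j 1 : Matrix (Fin n) (Fin n) ℂ) i i = t := by
    simp [hij.symm]
  rw [hii, hin.re_add_self, hin.re_ofReal_smul_left t (single i i 1) (single j j 1)] at h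
  linarith

end MonotoneMetricFamily

/-- for a diagonal positive definite state,
`K ρ E₁₁ E₁₁ = K² (diag (p₁, p₁)) E₁₂ E₁₂`. -/
theorem stmt8
    (K : (n : ℕ) → Matrix (Fin n) (Fin n) ℂ →
      Matrix (Fin n) (Fin n) ℂ → Matrix (Fin n) (Fin n) ℂ → ℂ)
    (hK : MonotoneMetricFamily K)
    (n : ℕ) (hn : 1 ≤ n) (p : Fin n → ℝ)
    (hρ : (Matrix.diagonal (fun i => (p i : ℂ))).PosDef)
    (htr : (Matrix.diagonal (fun i => (p i : ℂ))).trace.re ≤ 1)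
    (hp₁ : p ⟨0, by omega⟩ ≤ 1 / 2) :
    K n (Matrix.diagonal (fun i => (p i : ℂ)))
      (Matrix.single (⟨0, by omega⟩ : Fin n) (⟨0, by omega⟩ : Fin n) 1)
      (Matrix.single (⟨0, by omega⟩ : Fin n) (⟨0, by omega⟩ : Fin n) 1) =
    K 2 (Matrix.diagonal ![(p ⟨0, by omega⟩ : ℂ), (p ⟨0, by omega⟩ : ℂ)])
      (Matrix.single 0 1 1) (Matrix.single 0 1 1) := by
  set i₀ : Fin n := ⟨0, by omega⟩
  set c : ℂ := (p i₀ : ℂ)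
  have hc : 0 < c := posDef_diagonal_iff.mp hρ i₀
  have hρ' : (diagonal ![c, c]).PosDef := by
    rw [posDef_diagonal_iff]
    intro i; fin_cases i <;> exact hc
  have htr' : (diagonal ![c, c]).trace.re ≤ 1 := by
    simp only [trace_diagonal, Fin.sum_univ_two, Matrix.cons_val_zero, Matrix.cons_val_one,
      Complex.add_re, c, Complex.ofReal_re]
    linarith
  have hscalar : diagonal ![c, c] = c • 1 := by
    rw [smul_one_eq_diagonal]
    congr 1
    funext i; fin_cases i <;> rfl
  have hinv : ∀ U ∈ unitaryGroup (Fin 2) ℂ, ∀ X,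
      (K 2 (diagonal ![c, c]) (U * X * Uᴴ) (U * X * Uᴴ)).re = (K 2 (diagonal ![c, c]) X X).re :=
    fun U hU => hK.re_conj_unitary hρ' htr' hU (by
      rw [hscalar, Matrix.mul_smul, Matrix.mul_one, Matrix.smul_mul,
        ← star_eq_conjTranspose, mem_unitaryGroup_iff.mp hU])
  have hin' := hK.1 2 _ hρ' htr'
  refine Complex.ext ?_ (by rw [(hK.1 n _ hρ htr).im_self, hin'.im_self])
  rw [hK.re_single_eq hρ htr hρ' htr' (i := i₀) (j := 0) rfl]
  exact hin'.re_single_zero_zero_eq_re_single_zero_one hinv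
    (hK.re_single_single_eq_zero hρ' htr' (by decide))
end

section
/- Let (K^(n))_{n≥1} be a family of CPTNI monotone metrics. For i = 1, 2 let ρ_i be a positive definite complex n_i×n_i matrix and X_i, Y_i complex n_i×n_i matrices, with Tr ρ₁ + Tr ρ₂ ≤ 1. Then K^(n₁+n₂)_{ρ₁⊕ρ₂}(X₁⊕X₂, Y₁⊕Y₂) = K^(n₁)_{ρ₁}(X₁, Y₁) + K^(n₂)_{ρ₂}(X₂, Y₂), where ⊕ denotes the block-diagonal direct sum of matrices. -/
/-!
The embedding `X ↦ X ⊕ 0` (remainder `0 ⊕ ρ₂`) and the compression `Z ↦ Z₁₁` are CPTNI maps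
carrying `ρ₁` and `ρ₁ ⊕ ρ₂` into each other, and the compression undoes the embedding, so
monotonicity in both directions makes the embedding an isometry of the quadratic forms;
polarization upgrades this to the inner products. The same holds for the second block. For the
cross terms, compressing `X ⊕ cY` to `X` gives `‖X ⊕ 0‖ ≤ ‖X ⊕ cY‖` for every `c ∈ ℂ`, which
forces `X ⊕ 0` and `0 ⊕ Y` to be orthogonal.
-/

open Matrix ComplexOrder

/-- Block-diagonal direct sum of square matrices, reindexed to `Fin (n₁ + n₂)`. -/
def dsum {n₁ n₂ : ℕ} (A : Matrix (Fin n₁) (Fin n₁) ℂ) (B : Matrix (Fin n₂) (Fin n₂) ℂ) :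
    Matrix (Fin (n₁ + n₂)) (Fin (n₁ + n₂)) ℂ :=
  Matrix.reindex finSumFinEquiv finSumFinEquiv (Matrix.fromBlocks A 0 0 B)

@[simp]
lemma Fin.castAdd_ne_natAdd {m n : ℕ} (i : Fin m) (j : Fin n) :
    Fin.castAdd n i ≠ Fin.natAdd m j := by
  simp only [ne_eq, Fin.ext_iff, Fin.val_castAdd, Fin.val_natAdd]
  omega

@[simp]
lemma Fin.natAdd_ne_castAdd {m n : ℕ} (i : Fin m) (j : Fin n) :
    Fin.natAdd m j ≠ Fin.castAdd n i :=
  (Fin.castAdd_ne_natAdd i j).symm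

section Conjugation

variable {m n : Type*} [Fintype n]

def conjMap (V : Matrix m n ℂ) : Matrix n n ℂ →ₗ[ℂ] Matrix m m ℂ where
  toFun X := V * X * Vᴴ
  map_add' X Y := by rw [Matrix.mul_add, Matrix.add_mul]
  map_smul' c X := by simp

@[simp]
lemma conjMap_apply (V : Matrix m n ℂ) (X : Matrix n n ℂ) : conjMap V X = V * X * Vᴴ := rfl

end Conjugation

lemma isCPTNI_conjMap {m n : ℕ} {V : Matrix (Fin m) (Fin n) ℂ}
    (hV : (1 - Vᴴ * V).PosSemidef) : IsCPTNI (conjMap V) :=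
  ⟨1, fun _ => V, fun X => by simp, by simpa using hV⟩

namespace IsInnerProduct

variable {n m : ℕ} {K : Matrix (Fin n) (Fin n) ℂ → Matrix (Fin n) (Fin n) ℂ → ℂ}

lemma re_apply_add_smul_self (hK : IsInnerProduct K) (c : ℂ) (X Y : Matrix (Fin n) (Fin n) ℂ) :
    (K (X + c • Y) (X + c • Y)).re =
      (K X X).re + 2 * (c * K X Y).re + Complex.normSq c * (K Y Y).re := by
  obtain ⟨hadd_left, hadd_right, hsmul_right, hsmul_left, hconj, -⟩ := hK
  rw [hadd_left, hadd_right, hadd_right, hsmul_right, hsmul_left, hsmul_left, hsmul_right,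
    hconj X Y]
  simp only [Complex.add_re, Complex.mul_re, Complex.mul_im, Complex.conj_re, Complex.conj_im,
    Complex.normSq_apply]
  ring

lemma apply_map_map_eq (hK : IsInnerProduct K)
    {K' : Matrix (Fin m) (Fin m) ℂ → Matrix (Fin m) (Fin m) ℂ → ℂ} (hK' : IsInnerProduct K') (T : Matrix (Fin n) (Fin n) ℂ →ₗ[ℂ] Matrix (Fin m) (Fin m) ℂ)
    (hT : ∀ X, (K' (T X) (T X)).re = (K X X).re) (X Y : Matrix (Fin n) (Fin n) ℂ) :
    K' (T X) (T Y) = K X Y := by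
  have hpolar (c : ℂ) : (c * K' (T X) (T Y)).re = (c * K X Y).re := by
    have h := hT (X + c • Y)
    rw [map_add, map_smul, hK'.re_apply_add_smul_self, hK.re_apply_add_smul_self, hT X,
      hT Y] at h
    linarith
  apply Complex.ext
  · simpa using hpolar 1
  · simpa using hpolar Complex.I

lemma apply_eq_zero_of_forall_re_apply_self_le (hK : IsInnerProduct K)
    {A B : Matrix (Fin n) (Fin n) ℂ} (h : ∀ c : ℂ, (K A A).re ≤ (K (A + c • B) (A + c • B)).re) :
    K A B = 0 := by
  set κ := K A B
  -- With `c = -t κ̄` the hypothesis reads `0 ≤ t ‖κ‖² (t K(B,B) - 2)`, impossible for small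
  -- `t > 0` unless `κ = 0`.
  obtain ⟨t, ht_pos, htb⟩ : ∃ t : ℝ, 0 < t ∧ t * (K B B).re < 2 := by
    refine ⟨1 / (|(K B B).re| + 1), by positivity, ?_⟩
    rw [one_div_mul_eq_div, div_lt_iff₀ (by positivity)]
    linarith [le_abs_self (K B B).re, abs_nonneg (K B B).re]
  have hc := h (-(t : ℂ) * (starRingEnd ℂ) κ)
  have hcκ : (-(t : ℂ) * (starRingEnd ℂ) κ * κ).re = -t * Complex.normSq κ := by
    rw [mul_assoc, ← Complex.normSq_eq_conj_mul_self]
    simp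
  have hnormSq : Complex.normSq (-(t : ℂ) * (starRingEnd ℂ) κ) = t ^ 2 * Complex.normSq κ := by
    simp [Complex.normSq_mul, sq]
  rw [hK.re_apply_add_smul_self, hcκ, hnormSq] at hc
  have hN : 0 ≤ t * (Complex.normSq κ * (t * (K B B).re - 2)) := by linear_combination hc
  have : Complex.normSq κ = 0 := by
    nlinarith [(mul_nonneg_iff_of_pos_left ht_pos).mp hN, Complex.normSq_nonneg κ]
  exact Complex.normSq_eq_zero.mp this

end IsInnerProduct

namespace MonotoneMetricFamily

variable {K : (n : ℕ) → Matrix (Fin n) (Fin n) ℂ →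
      Matrix (Fin n) (Fin n) ℂ → Matrix (Fin n) (Fin n) ℂ → ℂ}
  {n m : ℕ} {ρ σ : Matrix (Fin n) (Fin n) ℂ} {ρ' σ' : Matrix (Fin m) (Fin m) ℂ}

lemma re_apply_map_self_le (hK : MonotoneMetricFamily K)
    {T : Matrix (Fin n) (Fin n) ℂ → Matrix (Fin m) (Fin m) ℂ} (hT : IsCPTNI T)
    (hσ' : σ'.PosSemidef) (hρ : ρ.PosDef) (hρ_tr : ρ.trace.re ≤ 1) (hρ' : ρ'.PosDef)
    (hρ'_tr : ρ'.trace.re ≤ 1) (hTρ : T ρ + σ' = ρ') (X : Matrix (Fin n) (Fin n) ℂ) :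
    (K m ρ' (T X) (T X)).re ≤ (K n ρ X X).re := by
  subst hTρ
  exact hK.2 n m T hT σ' hσ' ρ hρ hρ_tr hρ' hρ'_tr X

lemma apply_map_map_eq (hK : MonotoneMetricFamily K)
    {T : Matrix (Fin n) (Fin n) ℂ →ₗ[ℂ] Matrix (Fin m) (Fin m) ℂ}
    {S : Matrix (Fin m) (Fin m) ℂ → Matrix (Fin n) (Fin n) ℂ}
    (hT : IsCPTNI T) (hS : IsCPTNI S) (hST : ∀ X, S (T X) = X)
    (hσ : σ.PosSemidef) (hσ' : σ'.PosSemidef) (hρ : ρ.PosDef) (hρ_tr : ρ.trace.re ≤ 1)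
    (hρ' : ρ'.PosDef) (hρ'_tr : ρ'.trace.re ≤ 1) (hTρ : T ρ + σ' = ρ') (hSρ' : S ρ' + σ = ρ)
    (X Y : Matrix (Fin n) (Fin n) ℂ) :
    K m ρ' (T X) (T Y) = K n ρ X Y :=
  (hK.1 n ρ hρ hρ_tr).apply_map_map_eq (hK.1 m ρ' hρ' hρ'_tr) T (fun X => le_antisymm
    (hK.re_apply_map_self_le hT hσ' hρ hρ_tr hρ' hρ'_tr hTρ X)
    (by simpa only [hST] using hK.re_apply_map_self_le hS hσ hρ' hρ'_tr hρ hρ_tr hSρ' (T X)))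
    X Y

end MonotoneMetricFamily

section DirectSum

variable {n₁ n₂ : ℕ}

def blockInl (n₁ n₂ : ℕ) : Matrix (Fin (n₁ + n₂)) (Fin n₁) ℂ :=
  (1 : Matrix (Fin (n₁ + n₂)) (Fin (n₁ + n₂)) ℂ).submatrix id (Fin.castAdd n₂)

def blockInr (n₁ n₂ : ℕ) : Matrix (Fin (n₁ + n₂)) (Fin n₂) ℂ :=
  (1 : Matrix (Fin (n₁ + n₂)) (Fin (n₁ + n₂)) ℂ).submatrix id (Fin.natAdd n₁)

lemma dsum_add (A C : Matrix (Fin n₁) (Fin n₁) ℂ) (B D : Matrix (Fin n₂) (Fin n₂) ℂ) :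
    dsum (A + C) (B + D) = dsum A B + dsum C D := by
  ext i j
  induction i using Fin.addCases <;> induction j using Fin.addCases <;> simp [dsum]

lemma dsum_eq_dsum_zero_add (A : Matrix (Fin n₁) (Fin n₁) ℂ) (B : Matrix (Fin n₂) (Fin n₂) ℂ) :
    dsum A B = dsum A 0 + dsum 0 B := by
  rw [← dsum_add, add_zero, zero_add]

lemma dsum_smul (c : ℂ) (A : Matrix (Fin n₁) (Fin n₁) ℂ) (B : Matrix (Fin n₂) (Fin n₂) ℂ) :
    dsum (c • A) (c • B) = c • dsum A B := by
  ext i j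
  induction i using Fin.addCases <;> induction j using Fin.addCases <;> simp [dsum]

lemma dsum_one : dsum (1 : Matrix (Fin n₁) (Fin n₁) ℂ) (1 : Matrix (Fin n₂) (Fin n₂) ℂ) = 1 := by
  simp [dsum]

lemma trace_dsum (A : Matrix (Fin n₁) (Fin n₁) ℂ) (B : Matrix (Fin n₂) (Fin n₂) ℂ) :
    (dsum A B).trace = A.trace + B.trace := by
  simp [dsum, Matrix.trace, Fin.sum_univ_add]

lemma re_trace_dsum (A : Matrix (Fin n₁) (Fin n₁) ℂ) (B : Matrix (Fin n₂) (Fin n₂) ℂ) :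
    (dsum A B).trace.re = A.trace.re + B.trace.re := by
  rw [trace_dsum, Complex.add_re]

lemma det_dsum (A : Matrix (Fin n₁) (Fin n₁) ℂ) (B : Matrix (Fin n₂) (Fin n₂) ℂ) :
    (dsum A B).det = A.det * B.det := by
  simp [dsum, Matrix.det_fromBlocks_zero₂₁]

lemma blockInl_mul_mul_conjTranspose (X : Matrix (Fin n₁) (Fin n₁) ℂ) :
    blockInl n₁ n₂ * X * (blockInl n₁ n₂)ᴴ = dsum X 0 := by
  ext i j
  induction i using Fin.addCases <;> induction j using Fin.addCases <;>
    simp [blockInl, dsum, Matrix.mul_apply, Matrix.one_apply]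

lemma blockInr_mul_mul_conjTranspose (X : Matrix (Fin n₂) (Fin n₂) ℂ) :
    blockInr n₁ n₂ * X * (blockInr n₁ n₂)ᴴ = dsum 0 X := by
  ext i j
  induction i using Fin.addCases <;> induction j using Fin.addCases <;>
    simp [blockInr, dsum, Matrix.mul_apply, Matrix.one_apply]

lemma conjTranspose_blockInl_mul_dsum_mul (X : Matrix (Fin n₁) (Fin n₁) ℂ)
    (Y : Matrix (Fin n₂) (Fin n₂) ℂ) : (blockInl n₁ n₂)ᴴ * dsum X Y * blockInl n₁ n₂ = X := by
  ext i j
  simp [blockInl, dsum, Matrix.mul_apply, Matrix.one_apply]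

lemma conjTranspose_blockInr_mul_dsum_mul (X : Matrix (Fin n₁) (Fin n₁) ℂ)
    (Y : Matrix (Fin n₂) (Fin n₂) ℂ) : (blockInr n₁ n₂)ᴴ * dsum X Y * blockInr n₁ n₂ = Y := by
  ext i j
  simp [blockInr, dsum, Matrix.mul_apply, Matrix.one_apply]

lemma posSemidef_dsum {A : Matrix (Fin n₁) (Fin n₁) ℂ} {B : Matrix (Fin n₂) (Fin n₂) ℂ}
    (hA : A.PosSemidef) (hB : B.PosSemidef) : (dsum A B).PosSemidef := by
  rw [dsum_eq_dsum_zero_add, ← blockInl_mul_mul_conjTranspose, ← blockInr_mul_mul_conjTranspose]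
  exact (hA.mul_mul_conjTranspose_same _).add (hB.mul_mul_conjTranspose_same _)

lemma posDef_dsum {A : Matrix (Fin n₁) (Fin n₁) ℂ} {B : Matrix (Fin n₂) (Fin n₂) ℂ}
    (hA : A.PosDef) (hB : B.PosDef) : (dsum A B).PosDef := by
  rw [(posSemidef_dsum hA.posSemidef hB.posSemidef).posDef_iff_isUnit,
    Matrix.isUnit_iff_isUnit_det, det_dsum]
  exact (hA.isUnit.map Matrix.detMonoidHom).mul (hB.isUnit.map Matrix.detMonoidHom)

lemma conjTranspose_blockInl_mul_blockInl : (blockInl n₁ n₂)ᴴ * blockInl n₁ n₂ = 1 := by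
  simpa [dsum_one] using conjTranspose_blockInl_mul_dsum_mul (n₂ := n₂) 1 1

lemma conjTranspose_blockInr_mul_blockInr : (blockInr n₁ n₂)ᴴ * blockInr n₁ n₂ = 1 := by
  simpa [dsum_one] using conjTranspose_blockInr_mul_dsum_mul (n₁ := n₁) 1 1

lemma one_sub_blockInl_mul_conjTranspose :
    1 - blockInl n₁ n₂ * (blockInl n₁ n₂)ᴴ = dsum 0 1 := by
  ext i j
  induction i using Fin.addCases <;> induction j using Fin.addCases <;>
    simp [blockInl, dsum, Matrix.mul_apply, Matrix.one_apply]

lemma one_sub_blockInr_mul_conjTranspose :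
    1 - blockInr n₁ n₂ * (blockInr n₁ n₂)ᴴ = dsum 1 0 := by
  ext i j
  induction i using Fin.addCases <;> induction j using Fin.addCases <;>
    simp [blockInr, dsum, Matrix.mul_apply, Matrix.one_apply]

lemma isCPTNI_conjMap_blockInl : IsCPTNI (conjMap (blockInl n₁ n₂)) :=
  isCPTNI_conjMap (by simpa [conjTranspose_blockInl_mul_blockInl] using Matrix.PosSemidef.zero)

lemma isCPTNI_conjMap_blockInr : IsCPTNI (conjMap (blockInr n₁ n₂)) :=
  isCPTNI_conjMap (by simpa [conjTranspose_blockInr_mul_blockInr] using Matrix.PosSemidef.zero)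

lemma isCPTNI_conjMap_conjTranspose_blockInl : IsCPTNI (conjMap (blockInl n₁ n₂)ᴴ) :=
  isCPTNI_conjMap (by
    simpa [one_sub_blockInl_mul_conjTranspose] using posSemidef_dsum .zero .one)

lemma isCPTNI_conjMap_conjTranspose_blockInr : IsCPTNI (conjMap (blockInr n₁ n₂)ᴴ) :=
  isCPTNI_conjMap (by
    simpa [one_sub_blockInr_mul_conjTranspose] using posSemidef_dsum .one .zero)

end DirectSum

lemma re_trace_le_of_add_le {m n : ℕ} {A : Matrix (Fin m) (Fin m) ℂ}
    {B : Matrix (Fin n) (Fin n) ℂ} (hB : B.PosSemidef) (h : A.trace.re + B.trace.re ≤ 1) :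
    A.trace.re ≤ 1 := by
  linarith [(Complex.nonneg_iff.mp hB.trace_nonneg).1]

namespace MonotoneMetricFamily

variable {K : (n : ℕ) → Matrix (Fin n) (Fin n) ℂ →
      Matrix (Fin n) (Fin n) ℂ → Matrix (Fin n) (Fin n) ℂ → ℂ}
  {n₁ n₂ : ℕ} {ρ₁ : Matrix (Fin n₁) (Fin n₁) ℂ} {ρ₂ : Matrix (Fin n₂) (Fin n₂) ℂ}

lemma apply_dsum_zero_dsum_zero (hK : MonotoneMetricFamily K) (hρ₁ : ρ₁.PosDef)
    (hρ₂ : ρ₂.PosDef) (htr : ρ₁.trace.re + ρ₂.trace.re ≤ 1) (X Y : Matrix (Fin n₁) (Fin n₁) ℂ) :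
    K (n₁ + n₂) (dsum ρ₁ ρ₂) (dsum X 0) (dsum Y 0) = K n₁ ρ₁ X Y := by
  simpa [blockInl_mul_mul_conjTranspose] using
    hK.apply_map_map_eq isCPTNI_conjMap_blockInl isCPTNI_conjMap_conjTranspose_blockInl
      (fun X => by simp [blockInl_mul_mul_conjTranspose, conjTranspose_blockInl_mul_dsum_mul])
      .zero (posSemidef_dsum .zero hρ₂.posSemidef) hρ₁
      (re_trace_le_of_add_le hρ₂.posSemidef htr) (posDef_dsum hρ₁ hρ₂)
      ((re_trace_dsum ρ₁ ρ₂).trans_le htr)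
      (by rw [conjMap_apply, blockInl_mul_mul_conjTranspose, ← dsum_add, add_zero, zero_add])
      (by simp [conjTranspose_blockInl_mul_dsum_mul]) X Y

lemma apply_zero_dsum_zero_dsum (hK : MonotoneMetricFamily K) (hρ₁ : ρ₁.PosDef)
    (hρ₂ : ρ₂.PosDef) (htr : ρ₁.trace.re + ρ₂.trace.re ≤ 1) (X Y : Matrix (Fin n₂) (Fin n₂) ℂ) :
    K (n₁ + n₂) (dsum ρ₁ ρ₂) (dsum 0 X) (dsum 0 Y) = K n₂ ρ₂ X Y := by
  simpa [blockInr_mul_mul_conjTranspose] using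
    hK.apply_map_map_eq isCPTNI_conjMap_blockInr isCPTNI_conjMap_conjTranspose_blockInr
      (fun X => by simp [blockInr_mul_mul_conjTranspose, conjTranspose_blockInr_mul_dsum_mul])
      .zero (posSemidef_dsum hρ₁.posSemidef .zero) hρ₂
      (re_trace_le_of_add_le hρ₁.posSemidef (by linarith)) (posDef_dsum hρ₁ hρ₂)
      ((re_trace_dsum ρ₁ ρ₂).trans_le htr)
      (by rw [conjMap_apply, blockInr_mul_mul_conjTranspose, ← dsum_add, add_zero, zero_add])
      (by simp [conjTranspose_blockInr_mul_dsum_mul]) X Y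

lemma apply_dsum_zero_zero_dsum (hK : MonotoneMetricFamily K) (hρ₁ : ρ₁.PosDef)
    (hρ₂ : ρ₂.PosDef) (htr : ρ₁.trace.re + ρ₂.trace.re ≤ 1) (X : Matrix (Fin n₁) (Fin n₁) ℂ)
    (Y : Matrix (Fin n₂) (Fin n₂) ℂ) :
    K (n₁ + n₂) (dsum ρ₁ ρ₂) (dsum X 0) (dsum 0 Y) = 0 := by
  have htr' : (dsum ρ₁ ρ₂).trace.re ≤ 1 := (re_trace_dsum ρ₁ ρ₂).trans_le htr
  refine (hK.1 _ _ (posDef_dsum hρ₁ hρ₂) htr').apply_eq_zero_of_forall_re_apply_self_le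
    fun c => ?_
  have hsum : dsum X 0 + c • dsum 0 Y = dsum X (c • Y) := by
    rw [← dsum_smul, smul_zero, ← dsum_add, add_zero, zero_add]
  rw [hK.apply_dsum_zero_dsum_zero hρ₁ hρ₂ htr, hsum]
  simpa [conjTranspose_blockInl_mul_dsum_mul] using
    hK.re_apply_map_self_le isCPTNI_conjMap_conjTranspose_blockInl .zero
      (posDef_dsum hρ₁ hρ₂) htr' hρ₁ (re_trace_le_of_add_le hρ₂.posSemidef htr)
      (by simp [conjTranspose_blockInl_mul_dsum_mul]) (dsum X (c • Y))

end MonotoneMetricFamily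

/-- additivity of CPTNI monotone metrics with respect to direct sums. -/
theorem stmt9
    (K : (n : ℕ) → Matrix (Fin n) (Fin n) ℂ →
      Matrix (Fin n) (Fin n) ℂ → Matrix (Fin n) (Fin n) ℂ → ℂ)
    (hK : MonotoneMetricFamily K)
    {n₁ n₂ : ℕ}
    (ρ₁ : Matrix (Fin n₁) (Fin n₁) ℂ) (hρ₁ : ρ₁.PosDef)
    (ρ₂ : Matrix (Fin n₂) (Fin n₂) ℂ) (hρ₂ : ρ₂.PosDef)
    (htr : ρ₁.trace.re + ρ₂.trace.re ≤ 1)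
    (X₁ Y₁ : Matrix (Fin n₁) (Fin n₁) ℂ) (X₂ Y₂ : Matrix (Fin n₂) (Fin n₂) ℂ) :
    K (n₁ + n₂) (dsum ρ₁ ρ₂) (dsum X₁ X₂) (dsum Y₁ Y₂) =
      K n₁ ρ₁ X₁ Y₁ + K n₂ ρ₂ X₂ Y₂ := by
  obtain ⟨hadd_left, hadd_right, -, -, hconj, -⟩ :=
    hK.1 _ _ (posDef_dsum hρ₁ hρ₂) ((re_trace_dsum ρ₁ ρ₂).trans_le htr)
  rw [dsum_eq_dsum_zero_add X₁, dsum_eq_dsum_zero_add Y₁, hadd_left, hadd_right, hadd_right,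
    hconj (dsum Y₁ 0) (dsum 0 X₂), hK.apply_dsum_zero_zero_dsum hρ₁ hρ₂ htr,
    hK.apply_dsum_zero_zero_dsum hρ₁ hρ₂ htr, hK.apply_dsum_zero_dsum_zero hρ₁ hρ₂ htr,
    hK.apply_zero_dsum_zero_dsum hρ₁ hρ₂ htr, map_zero, add_zero, zero_add]
end

section
/- If f : (0,∞) → (0,∞) is operator concave, i.e., for every n, all positive definite complex Hermitian n×n matrices A and B, and every real p with 0 ≤ p ≤ 1 one has f(pA + (1-p)B) ≥ p f(A) + (1-p) f(B) in the Loewner order, then f is operator monotone: for all positive definite Hermitian matrices A ≤ B, one has f(A) ≤ f(B). -/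
open Matrix ComplexOrder

/-!
Given `0 < A ≤ B` and `0 ≤ p < 1`, write `B = p A + (1 - p) C` with
`C = (B - p A) / (1 - p) = A + (B - A) / (1 - p)` positive definite. Concavity and `f(C) ≥ 0` give
`f(B) ≥ p f(A) + (1 - p) f(C) ≥ p f(A)`, and letting `p → 1` in the closed cone of positive
semidefinite matrices gives `f(B) ≥ f(A)`.
-/

open Filter Topology

def OperatorConcave (f : ℝ → ℝ) : Prop :=
  ∀ (n : ℕ) (A B : Matrix (Fin n) (Fin n) ℂ), A.PosDef → B.PosDef →
    ∀ (p : ℝ), 0 ≤ p → p ≤ 1 →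
      (herCFC f (((p : ℝ) : ℂ) • A + (((1 - p : ℝ)) : ℂ) • B) -
        (((p : ℝ) : ℂ) • herCFC f A + (((1 - p : ℝ)) : ℂ) • herCFC f B)).PosSemidef

theorem Matrix.isClosed_setOf_posSemidef {n 𝕜 : Type*} [Fintype n] [RCLike 𝕜] :
    IsClosed {A : Matrix n n 𝕜 | A.PosSemidef} := by
  simp only [posSemidef_iff_dotProduct_mulVec, Set.ofPred_and, Set.ofPred_forall]
  exact (isClosed_eq continuous_id.matrix_conjTranspose continuous_id).inter
    (isClosed_iInter fun x => isClosed_le continuous_const (by fun_prop))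

theorem herCFC_posSemidef {n : ℕ} {f : ℝ → ℝ} (hf : ∀ x, 0 < x → 0 ≤ f x)
    {A : Matrix (Fin n) (Fin n) ℂ} (hA : A.PosDef) : (herCFC f A).PosSemidef := by
  rw [herCFC, dif_pos hA.isHermitian, star_eq_conjTranspose]
  refine (PosSemidef.diagonal fun i => ?_).mul_mul_conjTranspose_same _
  exact Complex.zero_le_real.mpr (hf _ (hA.eigenvalues_pos i))

theorem herCFC_sub_smul_posSemidef_of_operatorConcave {n : ℕ} {f : ℝ → ℝ}
    (hf : ∀ x, 0 < x → 0 ≤ f x) (hconc : OperatorConcave f)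
    {A B : Matrix (Fin n) (Fin n) ℂ} (hA : A.PosDef) (hAB : (B - A).PosSemidef)
    {p : ℝ} (hp0 : 0 ≤ p) (hp1 : p < 1) :
    (herCFC f B - (p : ℂ) • herCFC f A).PosSemidef := by
  have hq : 0 < 1 - p := sub_pos.mpr hp1
  set C := (((1 - p)⁻¹ : ℝ) : ℂ) • (B - (p : ℂ) • A)
  have hC : C.PosDef := by
    have : B - (p : ℂ) • A = ((1 - p : ℝ) : ℂ) • A + (B - A) := by
      push_cast; rw [sub_smul, one_smul]; abel
    refine PosDef.smul ?_ (Complex.zero_lt_real.mpr (inv_pos.mpr hq))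
    rw [this]
    exact (hA.smul (Complex.zero_lt_real.mpr hq)).add_posSemidef hAB
  have hdecomp : (p : ℂ) • A + ((1 - p : ℝ) : ℂ) • C = B := by
    rw [smul_smul, ← Complex.ofReal_mul, mul_inv_cancel₀ hq.ne', Complex.ofReal_one, one_smul]
    abel
  have hfC := (herCFC_posSemidef hf hC).smul (Complex.zero_le_real.mpr hq.le)
  have h := (hconc n A C hA hC p hp0 hp1.le).add hfC
  rwa [hdecomp, sub_add_eq_sub_sub, sub_add_cancel] at h

/-- every operator concave function `f : (0,∞) → (0,∞)` is operator
monotone. -/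
theorem stmt13 (f : ℝ → ℝ) (hpos : ∀ x : ℝ, 0 < x → 0 < f x)
    (hconc : ∀ (n : ℕ) (A B : Matrix (Fin n) (Fin n) ℂ), A.PosDef → B.PosDef →
      ∀ (p : ℝ), 0 ≤ p → p ≤ 1 →
        (herCFC f (((p : ℝ) : ℂ) • A + (((1 - p : ℝ)) : ℂ) • B) -
          (((p : ℝ) : ℂ) • herCFC f A + (((1 - p : ℝ)) : ℂ) • herCFC f B)).PosSemidef) :
    OperatorMonotone f := by
  refine ⟨hpos, fun n A B hA _ hAB => ?_⟩
  have hlim : Tendsto (fun p : ℝ => herCFC f B - (p : ℂ) • herCFC f A) (𝓝[<] 1)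
      (𝓝 (herCFC f B - herCFC f A)) := by
    have : Continuous fun p : ℝ => herCFC f B - (p : ℂ) • herCFC f A := by fun_prop
    simpa using (this.tendsto 1).mono_left nhdsWithin_le_nhds
  refine isClosed_setOf_posSemidef.mem_of_tendsto hlim ?_
  filter_upwards [Ioo_mem_nhdsLT zero_lt_one] with p hp
  exact herCFC_sub_smul_posSemidef_of_operatorConcave (fun x hx => (hpos x hx).le) hconc hA hAB
    hp.1.le hp.2
end

section
/- Let f : (0,∞) → (0,∞) be operator monotone and let f'(x) = x · f(1/x) be its transpose. Then for all positive definite complex Hermitian n×n matrices A and B, one has A m_f B = B m_{f'} A; equivalently, A^{1/2} f(A^{-1/2} B A^{-1/2}) A^{1/2} = B^{1/2} f'(B^{-1/2} A B^{-1/2}) B^{1/2}. -/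
open Matrix ComplexOrder

/-- The square root `A^{1/2}` of a (positive semidefinite Hermitian) matrix. -/
noncomputable def matSqrt {n : ℕ} (A : Matrix (Fin n) (Fin n) ℂ) :
    Matrix (Fin n) (Fin n) ℂ :=
  herCFC Real.sqrt A

/-- The operator mean `A m_f B = A^{1/2} · f (A^{-1/2} B A^{-1/2}) · A^{1/2}`. -/
noncomputable def matMean {n : ℕ} (f : ℝ → ℝ) (A B : Matrix (Fin n) (Fin n) ℂ) :
    Matrix (Fin n) (Fin n) ℂ :=
  matSqrt A * herCFC f ((matSqrt A)⁻¹ * B * (matSqrt A)⁻¹) * matSqrt A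

/-! With `X = A^{1/2}`, `Y = B^{1/2}` and `S = X Y⁻¹` one has `Y⁻¹ A Y⁻¹ = S⋆ S` and
`X⁻¹ B X⁻¹ = (S S⋆)⁻¹`. Since `S (S⋆ S) = (S S⋆) S`, `S` intertwines every polynomial in `S⋆ S`
with the same polynomial in `S S⋆`, hence every function of them (the spectra are finite, so
functions agree with interpolating polynomials there). For `f' x = x f(x⁻¹)` this gives
`f'(S⋆ S) = S⁻¹ (S S⋆) f((S S⋆)⁻¹) S = S⋆ f(X⁻¹ B X⁻¹) S`; multiplying by `Y` on both sides
and using `Y S⋆ = S Y = X` gives `B m_{f'} A = A m_f B`. -/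

open Polynomial

theorem Polynomial.exists_eqOn_eval {K : Type*} [Field K] (f : K → K) {s : Set K}
    (hs : s.Finite) : ∃ q : K[X], s.EqOn f q.eval := by
  classical
  exact ⟨Lagrange.interpolate hs.toFinset id f, fun _ hx =>
    (Lagrange.eval_interpolate_at_node f (Set.injOn_id _) (hs.mem_toFinset.mpr hx)).symm⟩

theorem Polynomial.mul_aeval_mul_comm {R A : Type*} [CommSemiring R] [Semiring A] [Algebra R A]
    (a b : A) (q : R[X]) : a * aeval (b * a) q = aeval (a * b) q * a := by
  have h : SemiconjBy a (b * a) (a * b) := (mul_assoc a b a).symm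
  simp only [aeval_eq_sum_range, Finset.mul_sum, Finset.sum_mul, mul_smul_comm, smul_mul_assoc,
    (h.pow_right _).eq]

theorem herCFC_eq_cfc {n : ℕ} (f : ℝ → ℝ) (A : Matrix (Fin n) (Fin n) ℂ) :
    herCFC f A = cfc f A := by
  by_cases hA : A.IsHermitian
  · rw [herCFC, dif_pos hA, hA.cfc_eq, IsHermitian.cfc, Unitary.conjStarAlgAut_apply]
    rfl
  · rw [herCFC, dif_neg hA]
    exact (cfc_apply_of_not_predicate A hA).symm

namespace Matrix

variable {ι 𝕜 : Type*} [Fintype ι] [DecidableEq ι] [RCLike 𝕜]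

theorem continuousOn_spectrum (f : ℝ → ℝ) (A : Matrix ι ι 𝕜) :
    ContinuousOn f (spectrum ℝ A) :=
  A.finite_real_spectrum.continuousOn f

theorem cfc_eq_aeval_of_eqOn {f : ℝ → ℝ} {A : Matrix ι ι 𝕜} (hA : IsSelfAdjoint A)
    {q : ℝ[X]} (h : (spectrum ℝ A).EqOn f q.eval) : cfc f A = aeval A q :=
  (cfc_congr h).trans (cfc_polynomial q A hA)

theorem mul_cfc_star_mul_self (f : ℝ → ℝ) (T : Matrix ι ι 𝕜) :
    T * cfc f (star T * T) = cfc f (T * star T) * T := by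
  obtain ⟨q, hq⟩ := exists_eqOn_eval f
    ((star T * T).finite_real_spectrum.union (T * star T).finite_real_spectrum)
  rw [cfc_eq_aeval_of_eqOn (IsSelfAdjoint.star_mul_self T)
      (hq.mono Set.subset_union_left),
    cfc_eq_aeval_of_eqOn (IsSelfAdjoint.mul_star_self T)
      (hq.mono Set.subset_union_right)]
  exact mul_aeval_mul_comm T (star T) q

theorem cfc_mul_comp_inv (f : ℝ → ℝ) {P : Matrix ι ι 𝕜} (hP : IsSelfAdjoint P)
    (hPu : IsUnit P) : cfc (fun x => x * f x⁻¹) P = P * cfc f P⁻¹ := by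
  rw [cfc_mul (fun x => x) (fun x => f x⁻¹) P (continuousOn_spectrum _ _)
      (continuousOn_spectrum _ _), cfc_id' ℝ P hP, cfc_comp' f (·⁻¹) P
      ((P.finite_real_spectrum.image _).continuousOn f) (continuousOn_spectrum _ _) hP,
    cfc_ringInverse_id P hPu hP, ← nonsing_inv_eq_ringInverse]

theorem cfc_transpose_star_mul_self (f : ℝ → ℝ) {S : Matrix ι ι 𝕜} (hS : IsUnit S) :
    cfc (fun x => x * f x⁻¹) (star S * S) = star S * cfc f (S * star S)⁻¹ * S := by
  have hSdet : IsUnit S.det := (isUnit_iff_isUnit_det S).mp hS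
  calc cfc (fun x => x * f x⁻¹) (star S * S)
      = S⁻¹ * (S * cfc (fun x => x * f x⁻¹) (star S * S)) :=
        (nonsing_inv_mul_cancel_left _ _ hSdet).symm
    _ = S⁻¹ * (S * star S * cfc f (S * star S)⁻¹ * S) := by
        rw [mul_cfc_star_mul_self, cfc_mul_comp_inv f
          (IsSelfAdjoint.mul_star_self S) (hS.mul hS.star)]
    _ = star S * cfc f (S * star S)⁻¹ * S := by
        simp only [Matrix.mul_assoc, nonsing_inv_mul_cancel_left _ _ hSdet]

theorem PosSemidef.cfc_sqrt_mul_self {A : Matrix ι ι 𝕜} (hA : A.PosSemidef) :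
    cfc Real.sqrt A * cfc Real.sqrt A = A := by
  rw [← cfc_mul _ _ A (continuousOn_spectrum _ _) (continuousOn_spectrum _ _)]
  conv_rhs => rw [← cfc_id' ℝ A hA.1]
  refine cfc_congr ?_
  rw [hA.1.spectrum_real_eq_range_eigenvalues]
  rintro _ ⟨i, rfl⟩
  exact Real.mul_self_sqrt (hA.eigenvalues_nonneg i)

theorem PosDef.isUnit_cfc_sqrt {A : Matrix ι ι 𝕜} (hA : A.PosDef) :
    IsUnit (cfc Real.sqrt A) :=
  isUnit_of_mul_isUnit_left (hA.posSemidef.cfc_sqrt_mul_self ▸ hA.isUnit)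

theorem IsHermitian.mul_cfc_mul_eq_mul_cfc_transpose_mul (f : ℝ → ℝ) {X Y : Matrix ι ι 𝕜}
    (hX : X.IsHermitian) (hY : Y.IsHermitian) (hXu : IsUnit X) (hYu : IsUnit Y) :
    X * cfc f (X⁻¹ * (Y * Y) * X⁻¹) * X =
      Y * cfc (fun x => x * f x⁻¹) (Y⁻¹ * (X * X) * Y⁻¹) * Y := by
  have hYdet : IsUnit Y.det := (isUnit_iff_isUnit_det Y).mp hYu
  set S := X * Y⁻¹
  have hstar : star S = Y⁻¹ * X := by
    rw [star_mul, star_eq_conjTranspose, star_eq_conjTranspose, conjTranspose_nonsing_inv,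
      hX.eq, hY.eq]
  have hS_star_mul : Y⁻¹ * (X * X) * Y⁻¹ = star S * S := by
    simp only [hstar, S, Matrix.mul_assoc]
  have hS_mul_star_inv : (S * star S)⁻¹ = X⁻¹ * (Y * Y) * X⁻¹ := by
    simp only [hstar, S, mul_inv_rev, nonsing_inv_nonsing_inv _ hYdet, Matrix.mul_assoc]
  rw [hS_star_mul, cfc_transpose_star_mul_self f (hXu.mul (isUnit_nonsing_inv_iff.mpr hYu)),
    hS_mul_star_inv, hstar]
  simp only [Matrix.mul_assoc, mul_nonsing_inv_cancel_left _ _ hYdet, nonsing_inv_mul _ hYdet,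
    Matrix.mul_one]

end Matrix

theorem stmt17_general (f : ℝ → ℝ)
    {n : ℕ} (A B : Matrix (Fin n) (Fin n) ℂ) (hA : A.PosDef) (hB : B.PosDef) :
    matMean f A B = matMean (fun x => x * f x⁻¹) B A := by
  simp only [matMean, matSqrt, herCFC_eq_cfc]
  conv_lhs => rw [← hB.posSemidef.cfc_sqrt_mul_self]
  conv_rhs => rw [← hA.posSemidef.cfc_sqrt_mul_self]
  exact IsHermitian.mul_cfc_mul_eq_mul_cfc_transpose_mul f (cfc_predicate _ _)
    (cfc_predicate _ _) hA.isUnit_cfc_sqrt hB.isUnit_cfc_sqrt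

/-- `A m_f B = B m_{f'} A` where `f' x = x * f (1/x)` is the transpose of
the operator monotone function `f`. -/
theorem stmt17 (f : ℝ → ℝ) (hf : OperatorMonotone f)
    {n : ℕ} (A B : Matrix (Fin n) (Fin n) ℂ) (hA : A.PosDef) (hB : B.PosDef) :
    matMean f A B = matMean (fun x => x * f x⁻¹) B A :=
  stmt17_general f A B hA hB
end
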